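/- arXiv:2507.20634 — 3 statements merged into one kernel-verified Lean document; each statement's English description precedes it below -/
import Mathlib

section
/- Consider the MNN system of ODEs: for each i ∈ {1,…,n}, C_i v̇_i = −(G_i+G_{ai}) v_i − q̂'_i(φˢ_i) v_i + Σ_{j ∈ C_i} q̂'_{ij}(φ_{ij}) v_j, φ̇ˢ_i = v_i, and φ̇_{ij} = v_j for j ∈ C_i, where C_i > 0 and each q̂ is C¹. Then for each i, the function Q_i(v, φˢ, φ) = C_i v_i + (G_i+G_{ai}) φˢ_i + q̂_i(φˢ_i) − Σ_{j ∈ C_i} q̂_{ij}(φ_{ij}) is constant along every solution of the system. -/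
/-! Differentiating `Q_i` along a solution, the term `C_i v̇_i` cancels the three remaining
contributions `(G_i + G_{ai}) φ̇ˢ_i`, `q̂'_i(φˢ_i) φ̇ˢ_i` and `Σ_j q̂'_{ij}(φ_{ij}) φ̇_{ij}` exactly,
because `φ̇ˢ_i = v_i` and `φ̇_{ij} = v_j`; a function with vanishing derivative on `ℝ` is constant. -/

lemma hasDerivAt_comp_of_differentiable {g f : ℝ → ℝ} {f' t : ℝ} (hg : Differentiable ℝ g)
    (hf : HasDerivAt f f' t) : HasDerivAt (fun t => g (f t)) (deriv g (f t) * f') t :=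
  (hg (f t)).hasDerivAt.comp t hf

lemma HasDerivAt.const_mul_of_one_div_mul {f : ℝ → ℝ} {c a t : ℝ} (hc : c ≠ 0)
    (hf : HasDerivAt f (1 / c * a) t) : HasDerivAt (fun t => c * f t) a t := by
  simpa [hc] using hf.const_mul c

theorem hasDerivAt_neuron_charge {ι : Type*} (s : Finset ι) {c g t : ℝ} (hc : c ≠ 0)
    {q : ℝ → ℝ} {qj : ι → ℝ → ℝ} (hq : Differentiable ℝ q)
    (hqj : ∀ j ∈ s, Differentiable ℝ (qj j)) {x ψ : ℝ → ℝ} {y ψj : ι → ℝ → ℝ}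
    (hx : HasDerivAt x
      (1 / c * (-g * x t - deriv q (ψ t) * x t + ∑ j ∈ s, deriv (qj j) (ψj j t) * y j t)) t)
    (hψ : HasDerivAt ψ (x t) t) (hψj : ∀ j ∈ s, HasDerivAt (ψj j) (y j t) t) :
    HasDerivAt (fun t => c * x t + g * ψ t + q (ψ t) - ∑ j ∈ s, qj j (ψj j t)) 0 t := by
  have hsum : HasDerivAt (fun t => ∑ j ∈ s, qj j (ψj j t))
      (∑ j ∈ s, deriv (qj j) (ψj j t) * y j t) t :=
    HasDerivAt.fun_sum fun j hj => hasDerivAt_comp_of_differentiable (hqj j hj) (hψj j hj)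
  exact ((((hx.const_mul_of_one_div_mul hc).fun_add (hψ.const_mul g)).fun_add
    (hasDerivAt_comp_of_differentiable hq hψ)).fun_sub hsum).congr_deriv (by ring)

theorem stmt_1_general (n : ℕ) (C G Ga : Fin n → ℝ) (hC : ∀ i, 0 < C i)
    (Cset : Fin n → Finset (Fin n))
    (qs : Fin n → ℝ → ℝ) (qc : Fin n → Fin n → ℝ → ℝ)
    (hqs : ∀ i, ContDiff ℝ 1 (qs i)) (hqc : ∀ i j, ContDiff ℝ 1 (qc i j))
    (v φs : ℝ → Fin n → ℝ) (φ : ℝ → Fin n → Fin n → ℝ)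
    (hv : ∀ t i, HasDerivAt (fun t => v t i)
      ((1 / C i) * (-(G i + Ga i) * v t i - deriv (qs i) (φs t i) * v t i +
        ∑ j ∈ Cset i, deriv (qc i j) (φ t i j) * v t j)) t)
    (hφs : ∀ t i, HasDerivAt (fun t => φs t i) (v t i) t)
    (hφ : ∀ t i, ∀ j ∈ Cset i, HasDerivAt (fun t => φ t i j) (v t j) t) :
    ∀ i, ∀ t₁ t₂ : ℝ,
      C i * v t₁ i + (G i + Ga i) * φs t₁ i + qs i (φs t₁ i) -
        ∑ j ∈ Cset i, qc i j (φ t₁ i j) =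
      C i * v t₂ i + (G i + Ga i) * φs t₂ i + qs i (φs t₂ i) -
        ∑ j ∈ Cset i, qc i j (φ t₂ i j) := by
  intro i
  have hQ : ∀ t, HasDerivAt (fun t => C i * v t i + (G i + Ga i) * φs t i + qs i (φs t i) -
      ∑ j ∈ Cset i, qc i j (φ t i j)) 0 t := fun t =>
    hasDerivAt_neuron_charge (Cset i) (hC i).ne' ((hqs i).differentiable one_ne_zero)
      (fun j _ => (hqc i j).differentiable one_ne_zero) (y := fun j t => v t j)
      (ψj := fun j t => φ t i j) (hv t i) (hφs t i) (hφ t i)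
  exact is_const_of_deriv_eq_zero (fun t => (hQ t).differentiableAt) (fun t => (hQ t).deriv)

theorem stmt_1 (n : ℕ) (C G Ga : Fin n → ℝ) (hC : ∀ i, 0 < C i)
    (Cset : Fin n → Finset (Fin n)) (hCset : ∀ i, i ∉ Cset i)
    (qs : Fin n → ℝ → ℝ) (qc : Fin n → Fin n → ℝ → ℝ)
    (hqs : ∀ i, ContDiff ℝ 1 (qs i)) (hqc : ∀ i j, ContDiff ℝ 1 (qc i j))
    (v φs : ℝ → Fin n → ℝ) (φ : ℝ → Fin n → Fin n → ℝ)
    (hv : ∀ t i, HasDerivAt (fun t => v t i)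
      ((1 / C i) * (-(G i + Ga i) * v t i - deriv (qs i) (φs t i) * v t i +
        ∑ j ∈ Cset i, deriv (qc i j) (φ t i j) * v t j)) t)
    (hφs : ∀ t i, HasDerivAt (fun t => φs t i) (v t i) t)
    (hφ : ∀ t i, ∀ j ∈ Cset i, HasDerivAt (fun t => φ t i j) (v t j) t) :
    ∀ i, ∀ t₁ t₂ : ℝ,
      C i * v t₁ i + (G i + Ga i) * φs t₁ i + qs i (φs t₁ i) -
        ∑ j ∈ Cset i, qc i j (φ t₁ i j) =
      C i * v t₂ i + (G i + Ga i) * φs t₂ i + qs i (φs t₂ i) -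
        ∑ j ∈ Cset i, qc i j (φ t₂ i j) :=
  stmt_1_general n C G Ga hC Cset qs qc hqs hqc v φs φ hv hφs hφ
end

section
/- Let φˢ(t) solve the reduced-order system C_i φ̇ˢ_i = −(G_i+G_{ai}) φˢ_i − q̂_i(φˢ_i) + Σ_{j∈C_i} q̂_{ij}(φˢ_j + φ_{ij0} − φˢ_{j0}) + Q_{i0}. Define v_i(t) = φ̇ˢ_i(t) and φ_{ij}(t) = φˢ_j(t) − φˢ_{j0} + φ_{ij0}. Then (v(t), φˢ(t), φ(t)) is a solution of the full MNN system C_i v̇_i = −(G_i+G_{ai}) v_i − q̂'_i(φˢ_i) v_i + Σ_{j∈C_i} q̂'_{ij}(φ_{ij}) v_j, φ̇ˢ_i = v_i, φ̇_{ij} = v_j. -/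
theorem hasDerivAt_nodal_balance {ι : Type*} (s : Finset ι) (c a Q : ℝ) {q : ℝ → ℝ}
    {p : ι → ℝ → ℝ} {y : ℝ → ℝ} {u : ι → ℝ → ℝ} {y' t : ℝ} {u' : ι → ℝ}
    (hq : DifferentiableAt ℝ q (y t)) (hp : ∀ j ∈ s, DifferentiableAt ℝ (p j) (u j t))
    (hy : HasDerivAt y y' t) (hu : ∀ j ∈ s, HasDerivAt (u j) (u' j) t) :
    HasDerivAt (fun t => c * (a * y t - q (y t) + ∑ j ∈ s, p j (u j t) + Q))
      (c * (a * y' - deriv q (y t) * y' + ∑ j ∈ s, deriv (p j) (u j t) * u' j)) t := by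
  have hlin : HasDerivAt (fun t => a * y t) (a * y') t := hy.const_mul a
  have hself : HasDerivAt (fun t => q (y t)) (deriv q (y t) * y') t := hq.hasDerivAt.comp t hy
  have hcoupled : HasDerivAt (fun t => ∑ j ∈ s, p j (u j t))
      (∑ j ∈ s, deriv (p j) (u j t) * u' j) t :=
    HasDerivAt.fun_sum fun j hj => (hp j hj).hasDerivAt.comp t (hu j hj)
  exact (((hlin.sub hself).add hcoupled).add_const Q).const_mul c

theorem stmt_3_general (n : ℕ) (C G Ga : Fin n → ℝ)
    (Cset : Fin n → Finset (Fin n))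
    (qs : Fin n → ℝ → ℝ) (qc : Fin n → Fin n → ℝ → ℝ)
    (hqs : ∀ i, ContDiff ℝ 1 (qs i)) (hqc : ∀ i j, ContDiff ℝ 1 (qc i j))
    (φs0 : Fin n → ℝ) (φij0 : Fin n → Fin n → ℝ) (Q0 : Fin n → ℝ)
    (φs : ℝ → Fin n → ℝ)
    (hred : ∀ t i, HasDerivAt (fun t => φs t i)
      ((1 / C i) * (-(G i + Ga i) * φs t i - qs i (φs t i) +
        ∑ j ∈ Cset i, qc i j (φs t j + φij0 i j - φs0 j) + Q0 i)) t)
    (v : ℝ → Fin n → ℝ)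
    (hvdef : ∀ t i, v t i = (1 / C i) * (-(G i + Ga i) * φs t i - qs i (φs t i) +
        ∑ j ∈ Cset i, qc i j (φs t j + φij0 i j - φs0 j) + Q0 i))
    (φ : ℝ → Fin n → Fin n → ℝ)
    (hφdef : ∀ t i j, φ t i j = φs t j - φs0 j + φij0 i j) :
    (∀ t i, HasDerivAt (fun t => v t i)
      ((1 / C i) * (-(G i + Ga i) * v t i - deriv (qs i) (φs t i) * v t i +
        ∑ j ∈ Cset i, deriv (qc i j) (φ t i j) * v t j)) t) ∧
    (∀ t i, HasDerivAt (fun t => φs t i) (v t i) t) ∧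
    (∀ t i j, HasDerivAt (fun t => φ t i j) (v t j) t) := by
  have hφs : ∀ t i, HasDerivAt (fun t => φs t i) (v t i) t := fun t i => hvdef t i ▸ hred t i
  have hφ : φ = fun t i j => φs t j + φij0 i j - φs0 j := by
    funext t i j
    rw [hφdef, sub_add_eq_add_sub]
  subst hφ
  refine ⟨fun t i => ?_, hφs, fun t i j => ((hφs t j).add_const _).sub_const _⟩
  rw [show (fun t => v t i) = _ from funext fun t => hvdef t i]
  exact hasDerivAt_nodal_balance _ _ _ _ (hqs i |>.differentiable one_ne_zero _)
    (fun j _ => hqc i j |>.differentiable one_ne_zero _) (hφs t i)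
    (fun j _ => ((hφs t j).add_const _).sub_const _)

theorem stmt_3 (n : ℕ) (C G Ga : Fin n → ℝ) (hC : ∀ i, 0 < C i)
    (Cset : Fin n → Finset (Fin n)) (hCset : ∀ i, i ∉ Cset i)
    (qs : Fin n → ℝ → ℝ) (qc : Fin n → Fin n → ℝ → ℝ)
    (hqs : ∀ i, ContDiff ℝ 1 (qs i)) (hqc : ∀ i j, ContDiff ℝ 1 (qc i j))
    (φs0 : Fin n → ℝ) (φij0 : Fin n → Fin n → ℝ) (Q0 : Fin n → ℝ)
    (φs : ℝ → Fin n → ℝ) (hinit : φs 0 = φs0)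
    (hred : ∀ t i, HasDerivAt (fun t => φs t i)
      ((1 / C i) * (-(G i + Ga i) * φs t i - qs i (φs t i) +
        ∑ j ∈ Cset i, qc i j (φs t j + φij0 i j - φs0 j) + Q0 i)) t)
    (v : ℝ → Fin n → ℝ)
    (hvdef : ∀ t i, v t i = (1 / C i) * (-(G i + Ga i) * φs t i - qs i (φs t i) +
        ∑ j ∈ Cset i, qc i j (φs t j + φij0 i j - φs0 j) + Q0 i))
    (φ : ℝ → Fin n → Fin n → ℝ)
    (hφdef : ∀ t i j, φ t i j = φs t j - φs0 j + φij0 i j) :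
    (∀ t i, HasDerivAt (fun t => v t i)
      ((1 / C i) * (-(G i + Ga i) * v t i - deriv (qs i) (φs t i) * v t i +
        ∑ j ∈ Cset i, deriv (qc i j) (φ t i j) * v t j)) t) ∧
    (∀ t i, HasDerivAt (fun t => φs t i) (v t i) t) ∧
    (∀ t i j, HasDerivAt (fun t => φ t i j) (v t j) t) :=
  stmt_3_general n C G Ga Cset qs qc hqs hqc φs0 φij0 Q0 φs hred v hvdef φ hφdef
end

section
/- Consider φ̇_i = f_i(φ) = −(G_{ai}+G_i) φ_i − q̂_i(φ_i) + Σ_{j∈C_i} q̂_{ij}(φ_j + c_{ij}) + Q_i on ℝⁿ, where each q̂_i, q̂_{ij} satisfies: C¹, q̂(0)=0, 0 < G_off ≤ q̂' ≤ G_on, with derivative limits G± at ±∞. Assume for each i: min{G_i⁺, G_i⁻} > −(G_{ai}+G_i) + Σ_{j∈C_i} max{G_{ij}⁺, G_{ij}⁻}, where G_i^±, G_{ij}^± are the asymptotic slopes of q̂_i, q̂_{ij}. Then there exists R > 0 such that the closed ball {φ : ‖φ‖_∞ ≤ R} is positively invariant and globally attractive; in particular every solution is bounded and defined for all t ≥ 0.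 -/
/-!
Each memristor characteristic is asymptotically linear: its derivative tends to `G±`, so
`q y = G± * y + o(|y|)` as `y → ±∞`. With these asymptotics, condition (4) guarantees that
on a large enough sphere of the sup norm the field points strictly inwards:
`f φ i ≤ -1` at a coordinate with `φ i = ‖φ‖`, and `1 ≤ f φ i` where `φ i = -‖φ‖`. A comparison
argument for the (non-smooth) sup norm, run coordinate by coordinate, then shows that the ball is
positively invariant and that outside it the norm decreases at a uniform rate.
-/

open Filter Set Topology

theorem exists_abs_sub_mul_le_of_tendsto_deriv_atTop {q : ℝ → ℝ} {L ε : ℝ}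
    (hq : Differentiable ℝ q) (hL : Tendsto (deriv q) atTop (𝓝 L)) (hε : 0 < ε) :
    ∃ K, ∀ y, 0 ≤ y → |q y - L * y| ≤ ε * y + K := by
  obtain ⟨a, ha⟩ := eventually_atTop.1 (hL.eventually (Metric.closedBall_mem_nhds L hε))
  have hh : ∀ y, HasDerivAt (fun y => q y - L * y) (deriv q y - L) y := fun y =>
    ((hq y).hasDerivAt.sub ((hasDerivAt_id' y).const_mul L)).congr_deriv (by ring)
  obtain ⟨K, hK⟩ := (isCompact_Icc (a := 0) (b := max a 0)).exists_bound_of_continuousOn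
    (continuous_iff_continuousAt.2 fun y => (hh y).continuousAt).continuousOn
  refine ⟨K, fun y hy => ?_⟩
  rcases le_total y (max a 0) with hya | hya
  · have : |q y - L * y| ≤ K := hK y ⟨hy, hya⟩
    linarith [mul_nonneg hε.le hy]
  · have htail := norm_image_sub_le_of_norm_deriv_le_segment' (fun z _ => (hh z).hasDerivWithinAt)
      (fun z hz => ha z ((le_max_left a 0).trans hz.1)) y (right_mem_Icc.2 hya)
    have : |q (max a 0) - L * max a 0| ≤ K := hK _ ⟨le_max_right a 0, le_rfl⟩
    have := abs_sub_abs_le_abs_sub (q y - L * y) (q (max a 0) - L * max a 0)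
    simp only [Real.norm_eq_abs] at htail
    linarith [mul_nonneg hε.le (le_max_right a 0)]

theorem exists_abs_sub_mul_le_of_tendsto_deriv {q : ℝ → ℝ} {Lp Lm ε : ℝ}
    (hq : Differentiable ℝ q) (hp : Tendsto (deriv q) atTop (𝓝 Lp))
    (hm : Tendsto (deriv q) atBot (𝓝 Lm)) (hε : 0 < ε) :
    ∃ K, (∀ y, 0 ≤ y → |q y - Lp * y| ≤ ε * y + K) ∧
      ∀ y ≤ 0, |q y - Lm * y| ≤ -(ε * y) + K := by
  have hm' : Tendsto (deriv fun y => q (-y)) atTop (𝓝 (-Lm)) := by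
    rw [funext (deriv_comp_neg q)]
    exact (hm.comp tendsto_neg_atTop_atBot).neg
  obtain ⟨K₁, hK₁⟩ := exists_abs_sub_mul_le_of_tendsto_deriv_atTop hq hp hε
  obtain ⟨K₂, hK₂⟩ :=
    exists_abs_sub_mul_le_of_tendsto_deriv_atTop (hq.comp differentiable_neg :
      Differentiable ℝ fun y => q (-y)) hm' hε
  refine ⟨max K₁ K₂, fun y hy => (hK₁ y hy).trans (by gcongr; exact le_max_left _ _),
    fun y hy => ?_⟩
  have := hK₂ (-y) (neg_nonneg.2 hy)
  simp only [Function.comp_apply, neg_neg, neg_mul_neg] at this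
  linarith [le_max_right K₁ K₂]

theorem exists_min_slope_bounds_of_tendsto_deriv {q : ℝ → ℝ} {Lp Lm ε : ℝ}
    (hq : Differentiable ℝ q) (hp : Tendsto (deriv q) atTop (𝓝 Lp))
    (hm : Tendsto (deriv q) atBot (𝓝 Lm)) (hε : 0 < ε) :
    ∃ K, (∀ y, 0 ≤ y → (min Lp Lm - ε) * y - K ≤ q y) ∧
      ∀ y ≤ 0, q y ≤ (min Lp Lm - ε) * y + K := by
  obtain ⟨K, hpos, hneg⟩ := exists_abs_sub_mul_le_of_tendsto_deriv hq hp hm hε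
  refine ⟨K, fun y hy => ?_, fun y hy => ?_⟩
  · linarith [(abs_le.1 (hpos y hy)).1, mul_le_mul_of_nonneg_right (min_le_left Lp Lm) hy]
  · linarith [(abs_le.1 (hneg y hy)).2, mul_le_mul_of_nonpos_right (min_le_right Lp Lm) hy]

theorem exists_abs_le_max_slope_of_tendsto_deriv {q : ℝ → ℝ} {Lp Lm ε : ℝ}
    (hq : Differentiable ℝ q) (hq' : ∀ y, 0 ≤ deriv q y) (hp : Tendsto (deriv q) atTop (𝓝 Lp))
    (hm : Tendsto (deriv q) atBot (𝓝 Lm)) (hε : 0 < ε) :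
    ∃ K, ∀ y, |q y| ≤ (max Lp Lm + ε) * |y| + K := by
  have hLp : 0 ≤ Lp := ge_of_tendsto' hp hq'
  have hLm : 0 ≤ Lm := ge_of_tendsto' hm hq'
  obtain ⟨K, hpos, hneg⟩ := exists_abs_sub_mul_le_of_tendsto_deriv hq hp hm hε
  refine ⟨K, fun y => ?_⟩
  rcases le_total 0 y with hy | hy
  · have h := abs_sub_abs_le_abs_sub (q y) (Lp * y)
    rw [abs_of_nonneg (mul_nonneg hLp hy)] at h
    rw [abs_of_nonneg hy]
    linarith [hpos y hy, mul_le_mul_of_nonneg_right (le_max_left Lp Lm) hy]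
  · have h := abs_sub_abs_le_abs_sub (q y) (Lm * y)
    rw [abs_of_nonpos (mul_nonpos_of_nonneg_of_nonpos hLm hy)] at h
    rw [abs_of_nonpos hy]
    linarith [hneg y hy, mul_le_mul_of_nonpos_right (le_max_right Lp Lm) hy]

theorem abs_sum_comp_add_le {ι : Type*} (S : Finset ι) {q : ι → ℝ → ℝ} {M K c w : ι → ℝ}
    {m : ℝ} (hq : ∀ j ∈ S, ∀ y, |q j y| ≤ M j * |y| + K j) (hM : ∀ j ∈ S, 0 ≤ M j)
    (hw : ∀ j ∈ S, |w j| ≤ m) :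
    |∑ j ∈ S, q j (w j + c j)| ≤ (∑ j ∈ S, M j) * m + ∑ j ∈ S, (M j * |c j| + K j) := by
  rw [Finset.sum_mul, ← Finset.sum_add_distrib]
  refine (Finset.abs_sum_le_sum_abs _ _).trans (Finset.sum_le_sum fun j hj => ?_)
  calc |q j (w j + c j)| ≤ M j * |w j + c j| + K j := hq j hj _
    _ ≤ M j * (m + |c j|) + K j := by
      gcongr
      · exact hM j hj
      · exact (abs_add_le _ _).trans (by linarith [hw j hj])
    _ = M j * m + (M j * |c j| + K j) := by ring

open Finset in
theorem exists_radius_inward_of_slope_condition {ι : Type*} (S : Finset ι)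
    {p : ℝ → ℝ} {q : ι → ℝ → ℝ} {a Q Lp Lm : ℝ} {c Mp Mm : ι → ℝ}
    (hp : Differentiable ℝ p) (hpp : Tendsto (deriv p) atTop (𝓝 Lp))
    (hpm : Tendsto (deriv p) atBot (𝓝 Lm))
    (hq : ∀ j, Differentiable ℝ (q j)) (hq' : ∀ j y, 0 ≤ deriv (q j) y)
    (hqp : ∀ j, Tendsto (deriv (q j)) atTop (𝓝 (Mp j)))
    (hqm : ∀ j, Tendsto (deriv (q j)) atBot (𝓝 (Mm j)))
    (hcond : min Lp Lm > -a + ∑ j ∈ S, max (Mp j) (Mm j)) :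
    ∃ R, ∀ (w : ι → ℝ) (m : ℝ), R ≤ m → (∀ j, |w j| ≤ m) →
      -a * m - p m + ∑ j ∈ S, q j (w j + c j) + Q ≤ -1 ∧
      1 ≤ -a * -m - p (-m) + ∑ j ∈ S, q j (w j + c j) + Q := by
  set θ := a + min Lp Lm - ∑ j ∈ S, max (Mp j) (Mm j) with hθ
  have hθ0 : 0 < θ := by linarith
  -- `ε` is small enough that the perturbed slopes keep half of the margin `θ`.
  obtain ⟨ε, hε0, hε⟩ : ∃ ε > 0, (#S + 1) * ε = θ / 2 :=
    ⟨θ / 2 / (#S + 1), by positivity, mul_div_cancel₀ _ (by positivity)⟩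
  obtain ⟨Kp, hKp_pos, hKp_neg⟩ := exists_min_slope_bounds_of_tendsto_deriv hp hpp hpm hε0
  choose Kq hKq using fun j =>
    exists_abs_le_max_slope_of_tendsto_deriv (hq j) (hq' j) (hqp j) (hqm j) hε0
  set C := Kp + ∑ j ∈ S, ((max (Mp j) (Mm j) + ε) * |c j| + Kq j) + |Q|
  refine ⟨max 0 (2 * (C + 1) / θ), fun w m hm hw => ?_⟩
  have hm0 : 0 ≤ m := (le_max_left _ _).trans hm
  have hmθ : 2 * (C + 1) ≤ θ * m := (div_le_iff₀' hθ0).1 ((le_max_right _ _).trans hm)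
  have hsum := abs_le.1 <| abs_sum_comp_add_le S (c := c) (fun j _ => hKq j)
    (fun j _ => by linarith [ge_of_tendsto' (hqp j) (hq' j), le_max_left (Mp j) (Mm j)])
    (fun j _ => hw j)
  have hslopes : ∑ j ∈ S, (max (Mp j) (Mm j) + ε) = a + (min Lp Lm - ε) - θ / 2 := by
    rw [sum_add_distrib, sum_const, nsmul_eq_mul]; linarith
  rw [hslopes] at hsum
  have := hKp_pos m hm0
  have := hKp_neg (-m) (by linarith)
  constructor <;> linarith [le_abs_self Q, neg_abs_le Q]

theorem eventually_nhdsGT_le_of_hasDerivAt {u B : ℝ → ℝ} {u' B' t : ℝ}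
    (hu : HasDerivAt u u' t) (hB : HasDerivAt B B' t) (hle : u t ≤ B t)
    (hlt : u t = B t → u' < B') : ∀ᶠ z in 𝓝[>] t, u z ≤ B z := by
  rcases hle.lt_or_eq with hlt' | heq
  · exact nhdsWithin_le_nhds
      ((hu.continuousAt.eventually_lt hB.continuousAt hlt').mono fun _ => le_of_lt)
  · have hslope : ∀ᶠ z in 𝓝[>] t, 0 < slope (fun s => B s - u s) t z :=
      nhdsGT_le_nhdsNE t <| (hasDerivAt_iff_tendsto_slope.1 (hB.sub hu)).eventually
        (eventually_gt_nhds (sub_pos.2 (hlt heq)))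
    filter_upwards [hslope, self_mem_nhdsWithin] with z hz hzt
    exact sub_nonneg.1 (pos_of_slope_pos hzt hz (by simp [heq])).le

theorem pi_norm_le_of_deriv_lt_deriv_boundary {ι : Type*} [Fintype ι] [Nonempty ι]
    {x v : ℝ → ι → ℝ} {B B' : ℝ → ℝ} {a b : ℝ}
    (hx : ∀ t i, HasDerivAt (fun s => x s i) (v t i) t) (hB : ∀ t, HasDerivAt B (B' t) t)
    (ha : ‖x a‖ ≤ B a)
    (bound : ∀ t ∈ Ico a b, ‖x t‖ = B t →
      ∀ i, (x t i = B t → v t i < B' t) ∧ (-x t i = B t → -v t i < B' t)) :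
    ∀ t ∈ Icc a b, ‖x t‖ ≤ B t := by
  have hxc : Continuous x :=
    continuous_pi fun i => continuous_iff_continuousAt.2 fun t => (hx t i).continuousAt
  have hBc : Continuous B := continuous_iff_continuousAt.2 fun t => (hB t).continuousAt
  refine ((isClosed_le hxc.norm hBc).inter isClosed_Icc).Icc_subset_of_forall_mem_nhdsWithin ha ?_
  rintro t ⟨hle : ‖x t‖ ≤ B t, hab⟩
  have hcoord : ∀ i, ∀ᶠ z in 𝓝[>] t, |x z i| ≤ B z := fun i => by
    have hxi : |x t i| ≤ ‖x t‖ := by simpa using norm_le_pi_norm (x t) i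
    have htouch : ∀ y, |y| = |x t i| → y = B t → ‖x t‖ = B t := fun y hy h =>
      le_antisymm hle (by linarith [le_abs_self y])
    have hpos := eventually_nhdsGT_le_of_hasDerivAt (hx t i) (hB t)
      (by linarith [le_abs_self (x t i)])
      fun h => (bound t hab (htouch _ rfl h) i).1 h
    have hneg := eventually_nhdsGT_le_of_hasDerivAt (u := fun s => -x s i) (hx t i).neg (hB t)
      (by linarith [neg_le_abs (x t i)])
      fun h => (bound t hab (htouch _ (abs_neg _) h) i).2 h
    filter_upwards [hpos, hneg] with z h₁ h₂
    exact abs_le.2 ⟨by linarith, h₁⟩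
  filter_upwards [eventually_all.2 hcoord] with z hz
  exact (pi_norm_le_iff_of_nonneg ((abs_nonneg _).trans (hz (Classical.arbitrary ι)))).2
    fun i => (Real.norm_eq_abs _).trans_le (hz i)

theorem norm_le_of_ge_of_inward {ι : Type*} [Fintype ι] {x v : ℝ → ι → ℝ}
    (hx : ∀ t i, HasDerivAt (fun s => x s i) (v t i) t) {R δ : ℝ} (hδ : 0 < δ)
    (inward : ∀ t, R ≤ ‖x t‖ →
      ∀ i, (x t i = ‖x t‖ → v t i ≤ -δ) ∧ (x t i = -‖x t‖ → δ ≤ v t i))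
    {a : ℝ} (ha : ‖x a‖ ≤ R) {t : ℝ} (hat : a ≤ t) : ‖x t‖ ≤ R := by
  cases isEmpty_or_nonempty ι
  · simpa [Subsingleton.elim (x t) (x a)] using ha
  refine pi_norm_le_of_deriv_lt_deriv_boundary hx (fun _ => hasDerivAt_const _ R) ha
    (fun s _ hs i => ⟨fun h => ?_, fun h => ?_⟩) t ⟨hat, le_rfl⟩
  · linarith [(inward s hs.ge i).1 (h.trans hs.symm)]
  · linarith [(inward s hs.ge i).2 (by linarith)]

theorem exists_forall_ge_norm_le_of_inward {ι : Type*} [Fintype ι] {x v : ℝ → ι → ℝ}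
    (hx : ∀ t i, HasDerivAt (fun s => x s i) (v t i) t) {R δ : ℝ} (hR : 0 ≤ R) (hδ : 0 < δ)
    (inward : ∀ t, R ≤ ‖x t‖ →
      ∀ i, (x t i = ‖x t‖ → v t i ≤ -δ) ∧ (x t i = -‖x t‖ → δ ≤ v t i)) :
    ∃ T ≥ 0, ∀ t ≥ T, ‖x t‖ ≤ R := by
  by_cases h₀ : ‖x 0‖ ≤ R
  · exact ⟨0, le_rfl, fun t ht => norm_le_of_ge_of_inward hx hδ inward h₀ ht⟩
  cases isEmpty_or_nonempty ι
  · simp [Subsingleton.elim (x 0) 0, hR] at h₀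
  -- Compare with the rate `δ / 2`, not `δ`: the comparison needs a strict inequality at contact.
  obtain ⟨T, hδT⟩ : ∃ T, δ * T = 2 * (‖x 0‖ - R) := ⟨_, mul_div_cancel₀ _ hδ.ne'⟩
  have hT : 0 ≤ T := by nlinarith
  have hB : ∀ s, HasDerivAt (fun s => ‖x 0‖ - δ / 2 * s) (-(δ / 2)) s := fun s => by
    simpa using ((hasDerivAt_id s).const_mul (δ / 2)).const_sub ‖x 0‖
  have hxT := pi_norm_le_of_deriv_lt_deriv_boundary hx hB (by simp) (b := T)
    (fun s hs hxs i => ⟨fun h => ?_, fun h => ?_⟩) T ⟨hT, le_rfl⟩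
  · exact ⟨T, hT, fun t ht => norm_le_of_ge_of_inward hx hδ inward (by linarith) ht⟩
  all_goals
    have hRs : R ≤ ‖x s‖ := by nlinarith [hs.2]
  · linarith [(inward s hRs i).1 (h.trans hxs.symm)]
  · linarith [(inward s hRs i).2 (by linarith)]

theorem stmt_13_general (n : ℕ) (G Ga : Fin n → ℝ)
    (Cset : Fin n → Finset (Fin n))
    (qs : Fin n → ℝ → ℝ) (qc : Fin n → Fin n → ℝ → ℝ)
    (c : Fin n → Fin n → ℝ) (Q : Fin n → ℝ)
    -- Assumption 1 for the self-connection memristors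
    (Gsp Gsm : Fin n → ℝ)
    (hqs : ∀ i, ContDiff ℝ 1 (qs i))
    (hqsp : ∀ i, Tendsto (deriv (qs i)) atTop (nhds (Gsp i)))
    (hqsm : ∀ i, Tendsto (deriv (qs i)) atBot (nhds (Gsm i)))
    -- Assumption 1 for the interconnection memristors
    (Gcoff Gcon : Fin n → Fin n → ℝ) (Gcp Gcm : Fin n → Fin n → ℝ)
    (hqc : ∀ i j, ContDiff ℝ 1 (qc i j))
    (hqcoff : ∀ i j, 0 < Gcoff i j)
    (hqc' : ∀ i j φ, Gcoff i j ≤ deriv (qc i j) φ ∧ deriv (qc i j) φ ≤ Gcon i j)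
    (hqcp : ∀ i j, Tendsto (deriv (qc i j)) atTop (nhds (Gcp i j)))
    (hqcm : ∀ i j, Tendsto (deriv (qc i j)) atBot (nhds (Gcm i j)))
    -- condition (4)
    (hcond : ∀ i, min (Gsp i) (Gsm i) >
      -(Ga i + G i) + ∑ j ∈ Cset i, max (Gcp i j) (Gcm i j))
    (f : (Fin n → ℝ) → Fin n → ℝ)
    (hf : ∀ x i, f x i = -(Ga i + G i) * x i - qs i (x i) +
      ∑ j ∈ Cset i, qc i j (x j + c i j) + Q i) :
    ∃ R > (0 : ℝ),
      ∀ x : ℝ → Fin n → ℝ,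
        (∀ t i, HasDerivAt (fun t => x t i) (f (x t) i) t) →
        ((‖x 0‖ ≤ R → ∀ t ≥ (0 : ℝ), ‖x t‖ ≤ R) ∧
         ∃ T ≥ (0 : ℝ), ∀ t ≥ T, ‖x t‖ ≤ R) := by
  choose R hR using fun i => exists_radius_inward_of_slope_condition (Cset i) (c := c i)
    (Q := Q i) ((hqs i).differentiable one_ne_zero) (hqsp i) (hqsm i)
    (fun j => (hqc i j).differentiable one_ne_zero)
    (fun j y => (hqcoff i j).le.trans (hqc' i j y).1) (hqcp i) (hqcm i) (hcond i)
  obtain ⟨R₀, hR₀⟩ := Finite.exists_le R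
  refine ⟨max R₀ 1, by positivity, fun x hx => ?_⟩
  have inward : ∀ t, max R₀ 1 ≤ ‖x t‖ → ∀ i,
      (x t i = ‖x t‖ → f (x t) i ≤ -1) ∧ (x t i = -‖x t‖ → 1 ≤ f (x t) i) := by
    intro t ht i
    obtain ⟨hup, hlow⟩ := hR i (x t) ‖x t‖ ((hR₀ i).trans ((le_max_left _ _).trans ht))
      fun j => (Real.norm_eq_abs _).symm.trans_le (norm_le_pi_norm (x t) j)
    exact ⟨fun h => hf (x t) i ▸ h ▸ hup, fun h => hf (x t) i ▸ h ▸ hlow⟩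
  exact ⟨fun h₀ t ht => norm_le_of_ge_of_inward hx one_pos inward h₀ ht,
    exists_forall_ge_norm_le_of_inward hx (by positivity) one_pos inward⟩

theorem stmt_13 (n : ℕ) (G Ga : Fin n → ℝ)
    (Cset : Fin n → Finset (Fin n)) (hCset : ∀ i, i ∉ Cset i)
    (qs : Fin n → ℝ → ℝ) (qc : Fin n → Fin n → ℝ → ℝ)
    (c : Fin n → Fin n → ℝ) (Q : Fin n → ℝ)
    -- Assumption 1 for the self-connection memristors
    (Gsoff Gson : Fin n → ℝ) (Gsp Gsm : Fin n → ℝ)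
    (hqs : ∀ i, ContDiff ℝ 1 (qs i)) (hqs0 : ∀ i, qs i 0 = 0)
    (hqsoff : ∀ i, 0 < Gsoff i)
    (hqs' : ∀ i φ, Gsoff i ≤ deriv (qs i) φ ∧ deriv (qs i) φ ≤ Gson i)
    (hqsp : ∀ i, Tendsto (deriv (qs i)) atTop (nhds (Gsp i)))
    (hqsm : ∀ i, Tendsto (deriv (qs i)) atBot (nhds (Gsm i)))
    -- Assumption 1 for the interconnection memristors
    (Gcoff Gcon : Fin n → Fin n → ℝ) (Gcp Gcm : Fin n → Fin n → ℝ)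
    (hqc : ∀ i j, ContDiff ℝ 1 (qc i j)) (hqc0 : ∀ i j, qc i j 0 = 0)
    (hqcoff : ∀ i j, 0 < Gcoff i j)
    (hqc' : ∀ i j φ, Gcoff i j ≤ deriv (qc i j) φ ∧ deriv (qc i j) φ ≤ Gcon i j)
    (hqcp : ∀ i j, Tendsto (deriv (qc i j)) atTop (nhds (Gcp i j)))
    (hqcm : ∀ i j, Tendsto (deriv (qc i j)) atBot (nhds (Gcm i j)))
    -- condition (4)
    (hcond : ∀ i, min (Gsp i) (Gsm i) >
      -(Ga i + G i) + ∑ j ∈ Cset i, max (Gcp i j) (Gcm i j))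
    (f : (Fin n → ℝ) → Fin n → ℝ)
    (hf : ∀ x i, f x i = -(Ga i + G i) * x i - qs i (x i) +
      ∑ j ∈ Cset i, qc i j (x j + c i j) + Q i) :
    ∃ R > (0 : ℝ),
      ∀ x : ℝ → Fin n → ℝ,
        (∀ t i, HasDerivAt (fun t => x t i) (f (x t) i) t) →
        ((‖x 0‖ ≤ R → ∀ t ≥ (0 : ℝ), ‖x t‖ ≤ R) ∧
         ∃ T ≥ (0 : ℝ), ∀ t ≥ T, ‖x t‖ ≤ R) :=
  stmt_13_general n G Ga Cset qs qc c Q Gsp Gsm hqs hqsp hqsm Gcoff Gcon Gcp Gcm hqc hqcoff hqc'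
    hqcp hqcm hcond f hf
end
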